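/- arXiv:1904.02493 — 2 statements merged into one kernel-verified Lean document; each statement's English description precedes it below -/
import Mathlib

section
/- Under the stated setup, let w be a weight function. Then for each x ∈ B_δ(a_k), one has | Σ_{i ∈ R(x,h)} ∫_{σ_i} w(x − y) dy − Σ_{i ∈ R(x,h)} V_i(x) w(x − a_i) | ≤ π L_w r_σ h². -/
open MeasureTheory Metric Set

noncomputable section

/-- The plane `ℝ²` with the Euclidean norm. -/
abbrev E2 := EuclideanSpace ℝ (Fin 2)

/-- The open annulus `B_{r,ℓ}(x) = {y : ℓ < |y - x| < r}`. -/
def Ann (r ℓ : ℝ) (x : E2) : Set E2 := Metric.ball x r \ Metric.closedBall x ℓ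

/-- The `L¹` norm `‖g‖_{L¹(A)} = ∫_A |g(y)| dy`. -/
def L1N (g : E2 → ℝ) (A : Set E2) : ℝ := ∫ y in A, |g y|

/-- Partial derivative in the `i`-th coordinate direction. -/
def pd (i : Fin 2) (g : E2 → ℝ) : E2 → ℝ := fun x => fderiv ℝ g x (EuclideanSpace.single i 1)

/-- The multi-index derivative `D^(a1,a2) = ∂₁^{a1} ∂₂^{a2}`. -/
def Dmulti (a1 a2 : ℕ) (g : E2 → ℝ) : E2 → ℝ := (pd 0)^[a1] ((pd 1)^[a2] g)

/-- The seminorm `|f|_{C^j}` over `closure S`: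
the maximum over multi-indices `α` with `|α| = j` of `max_{x ∈ closure S} |D^α f x|`. -/
def CjSemi (S : Set E2) (j : ℕ) (f : E2 → ℝ) : ℝ :=
  sSup { v : ℝ | ∃ a1 a2 : ℕ, a1 + a2 = j ∧ ∃ x ∈ closure S, v = |Dmulti a1 a2 f x| }

/-- The Laplacian `Δf = ∂₁²f + ∂₂²f`. -/
def lap2 (f : E2 → ℝ) (x : E2) : ℝ := Dmulti 2 0 f x + Dmulti 0 2 f x

lemma ann_open (r ℓ : ℝ) (x : E2) : IsOpen (Ann r ℓ x) :=
  isOpen_ball.sdiff Metric.isClosed_closedBall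

lemma closure_ann_subset {r ℓ : ℝ} :
    closure (Ann r ℓ 0) ⊆ Metric.closedBall 0 r \ Metric.ball 0 ℓ := by
  apply closure_minimal
  · intro z hz
    exact ⟨ball_subset_closedBall hz.1, fun hc => hz.2 (ball_subset_closedBall hc)⟩
  · exact (Metric.isClosed_closedBall.sdiff isOpen_ball)

lemma mem_closure_ann {δ h : ℝ} (hδ : 0 < δ) {z : E2} (h1 : δ ≤ ‖z‖) (h2 : ‖z‖ < h) :
    z ∈ closure (Ann h δ 0) := by
  rcases lt_or_eq_of_le h1 with h1 | h1
  · exact subset_closure ⟨mem_ball_zero_iff.mpr h2, fun hc => absurd (mem_closedBall_zero_iff.mp hc) (not_le.mpr h1)⟩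
  · have hz0 : ‖z‖ = δ := h1.symm
    have hδh : δ < h := hz0 ▸ h2
    have hne : (0:ℝ) < h / δ - 1 := by
      have : 1 < h / δ := (one_lt_div hδ).mpr hδh
      linarith
    have htend : Filter.Tendsto (fun t : ℝ => (1 + t) • z) (nhdsWithin 0 (Set.Ioi 0)) (nhds z) := by
      have hc : Continuous (fun t : ℝ => (1 + t) • z) :=
        ((continuous_const.add continuous_id).smul continuous_const)
      have := hc.tendsto 0
      simp only [add_zero, one_smul] at this
      exact this.mono_left nhdsWithin_le_nhds
    refine mem_closure_of_tendsto htend ?_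
    filter_upwards [Ioo_mem_nhdsGT_of_mem (Set.mem_Ico.mpr ⟨le_refl 0, hne⟩)] with t ht
    have ht0 : 0 < t := ht.1
    have hnorm : ‖(1 + t) • z‖ = (1 + t) * δ := by
      rw [norm_smul, Real.norm_eq_abs, abs_of_pos (by linarith), hz0]
    constructor
    · rw [mem_ball_zero_iff, hnorm]
      have : 1 + t < h / δ := by linarith [ht.2]
      calc (1 + t) * δ < (h / δ) * δ := by nlinarith
        _ = h := by field_simp
    · intro hc
      rw [mem_closedBall_zero_iff, hnorm] at hc
      nlinarith

lemma e2_volume_ball (x : E2) (r : ℝ) (hr : 0 ≤ r) :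
    (volume (Metric.ball x r)).toReal = Real.pi * r ^ 2 := by
  rw [EuclideanSpace.volume_ball]
  have hcard : Fintype.card (Fin 2) = 2 := by simp
  rw [hcard]
  have h1 : Real.sqrt Real.pi ^ 2 / Real.Gamma ((2:ℕ) / 2 + 1) = Real.pi := by
    rw [Real.sq_sqrt Real.pi_pos.le]
    norm_num [Real.Gamma_two]
  rw [h1]
  rw [ENNReal.toReal_mul, ENNReal.toReal_pow, ENNReal.toReal_ofReal hr,
    ENNReal.toReal_ofReal Real.pi_pos.le]
  ring

/-- Lemma 2.2 (iv): quadrature error of the weight: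
`|Σᵢ ∫_{σᵢ} w(x - y) dy - Σᵢ Vᵢ(x) w(x - aᵢ)| ≤ π L_w r_σ h²`. -/
theorem weight_quadrature_error
    (Ω : Set E2) (hΩo : IsOpen Ω) (hΩb : Bornology.IsBounded Ω) (hΩc : IsConnected Ω)
    (H : ℝ) (hH : 0 < H)
    (N : ℕ) (a : Fin N → E2) (ha : Function.Injective a)
    (ΩH : Set E2) (hΩH : ΩH = {x : E2 | ∃ y ∈ Ω, dist x y < H})
    (haΩH : ∀ i, a i ∈ ΩH)
    (σ : Fin N → Set E2)
    (hσ : ∀ i, σ i = {x ∈ ΩH | ∀ j, j ≠ i → dist x (a i) < dist x (a j)})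
    (rσ : ℝ)
    (hrσ : IsGreatest {d : ℝ | ∃ i, ∃ y ∈ closure (σ i), d = dist y (a i)} rσ)
    (hrσH : rσ < H)
    (h : ℝ) (hrh : rσ < h) (hhH : h < H)
    (k : Fin N) (hak : a k ∈ σ k ∩ Ω)
    (δ : ℝ) (hδ : 0 < δ) (hBδ : Metric.ball (a k) δ ⊆ σ k ∩ Ω)
    (R : E2 → ℝ → Finset (Fin N))
    (hR : ∀ x r i, i ∈ R x r ↔ dist x (a i) < r ∧ i ≠ k)
    (V : Fin N → E2 → ℝ)
    (hV : ∀ i x, V i x = (volume (σ i ∩ Ann h δ x)).toReal)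
    (hcov : ∀ x ∈ Metric.ball (a k) δ,
      Metric.ball x (h + rσ) ⊆ ΩH ∧
      Metric.ball x h ⊆ ⋃ i ∈ {i : Fin N | dist x (a i) < h}, closure (σ i))
    (w : E2 → ℝ) (Lw C₀ : ℝ) (wrad : ℝ → ℝ)
    (hwLinf : MemLp w ⊤ volume)
    (hwCont : ContinuousOn w (closure (Ann h δ 0)))
    (hwNonneg : ∀ᵐ x ∂volume, 0 ≤ w x)
    (hwSupp : ∀ᵐ x ∂volume, x ∉ closure (Ann h δ 0) → w x = 0)
    (hLw : 0 < Lw)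
    (hwLip : ∀ x ∈ closure (Ann h δ 0), ∀ y ∈ closure (Ann h δ 0), |w x - w y| ≤ Lw * dist x y)
    (hwrad : IntegrableOn wrad (Set.Ioo δ h))
    (hwRad : ∀ᵐ x ∂volume, x ∈ Ann h δ 0 → w x = wrad ‖x‖)
    (hC₀ : 0 < C₀)
    (hwLB : ∀ x ∈ Metric.ball (a k) δ,
      C₀ ≤ (∑ i ∈ R x h, ∫ y in σ i, w (x - y)) ∧
      C₀ ≤ ∑ j ∈ R x h, V j x * w (x - a j))
 :
    ∀ x ∈ Metric.ball (a k) δ,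
      |(∑ i ∈ R x h, ∫ y in σ i, w (x - y)) - ∑ i ∈ R x h, V i x * w (x - a i)| ≤
        Real.pi * Lw * rσ * h ^ 2 := by
  intro x hx
  have hrσ0 : 0 ≤ rσ := by
    obtain ⟨i, y, hy, rfl⟩ := hrσ.1; exact dist_nonneg
  have hh0 : 0 ≤ h := le_of_lt (lt_of_le_of_lt hrσ0 hrh)
  have hLrσ : 0 ≤ Lw * rσ := mul_nonneg hLw.le hrσ0
  -- open sets
  have hΩHopen : IsOpen ΩH := by
    have : ΩH = ⋃ y ∈ Ω, ball y H := by
      rw [hΩH]; ext z; simp [mem_ball]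
    rw [this]; exact isOpen_biUnion fun y _ => isOpen_ball
  have hσopen : ∀ i, IsOpen (σ i) := by
    intro i
    have : σ i = ΩH ∩ ⋂ (j : Fin N), ⋂ (_ : j ≠ i), {x | dist x (a i) < dist x (a j)} := by
      rw [hσ]; ext z; simp [Set.mem_iInter]
    rw [this]
    refine hΩHopen.inter (isOpen_iInter_of_finite fun j => isOpen_iInter_of_finite fun _ => ?_)
    exact isOpen_lt (continuous_id.dist continuous_const) (continuous_id.dist continuous_const)
  have hσdisj : ∀ i j : Fin N, i ≠ j → Disjoint (σ i) (σ j) := by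
    intro i j hij
    rw [Set.disjoint_left]
    intro z hzi hzj
    rw [hσ] at hzi hzj
    exact absurd (hzj.2 i hij) (not_lt.mpr (hzi.2 j (Ne.symm hij)).le)
  -- notation
  set f : E2 → ℝ := fun y => w (x - y) with hfdef
  set I : Fin N → Set E2 := fun i => σ i ∩ Ann h δ x with hIdef
  have hImeas : ∀ i, MeasurableSet (I i) :=
    fun i => ((hσopen i).inter (ann_open h δ x)).measurableSet
  have hIball : ∀ i, I i ⊆ ball x h := fun i y hy => hy.2.1
  have hIfin : ∀ i, volume (I i) < ⊤ :=
    fun i => lt_of_le_of_lt (measure_mono (hIball i)) measure_ball_lt_top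
  -- measurability of f
  have hT : MeasurePreserving (fun y : E2 => x - y) volume volume :=
    Measure.measurePreserving_sub_left volume x
  have hTemb : MeasurableEmbedding (fun y : E2 => x - y) :=
    (MeasurableEquiv.subLeft x).measurableEmbedding
  have hfm : AEStronglyMeasurable f volume := by
    exact (hT.aestronglyMeasurable_comp_iff hTemb).mpr hwLinf.aestronglyMeasurable
  -- bound on w over closure of annulus
  have hcomp : IsCompact (closure (Ann h δ 0)) := by
    apply Bornology.IsBounded.isCompact_closure
    exact isBounded_ball.subset diff_subset
  obtain ⟨M, hM⟩ : ∃ M, ∀ z ∈ closure (Ann h δ 0), ‖w z‖ ≤ M :=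
    hcomp.exists_bound_of_continuousOn hwCont
  -- a.e. identity : f = indicator (Ann h δ x) f
  have hae1 : ∀ᵐ y : E2 ∂volume, x - y ∉ closure (Ann h δ 0) → w (x - y) = 0 :=
    hT.quasiMeasurePreserving.ae hwSupp
  have hsphδ : ∀ᵐ y : E2 ∂volume, y ∉ sphere x δ := by
    have : volume (sphere x δ) = 0 := Measure.addHaar_sphere volume x δ
    exact measure_eq_zero_iff_ae_notMem.mp this
  have hsphh : ∀ᵐ y : E2 ∂volume, y ∉ sphere x h := by
    have : volume (sphere x h) = 0 := Measure.addHaar_sphere volume x h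
    exact measure_eq_zero_iff_ae_notMem.mp this
  have hindic : f =ᵐ[volume] (Ann h δ x).indicator f := by
    filter_upwards [hae1, hsphδ, hsphh] with y h1 h2 h3
    by_cases hy : y ∈ Ann h δ x
    · rw [Set.indicator_of_mem hy]
    · rw [Set.indicator_of_notMem hy]
      apply h1
      intro hc
      have hc' := closure_ann_subset hc
      have hcb : ‖x - y‖ ≤ h := mem_closedBall_zero_iff.mp hc'.1
      have hnb : ¬ ‖x - y‖ < δ := fun hlt => hc'.2 (mem_ball_zero_iff.mpr hlt)
      have hn : ‖x - y‖ = dist y x := by rw [← dist_eq_norm, dist_comm]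
      have hball : ¬ (y ∈ ball x h) ∨ y ∈ closedBall x δ := by
        by_contra hcc; push_neg at hcc
        exact hy ⟨hcc.1, hcc.2⟩
      rcases hball with hb | hb
      · rw [mem_ball, not_lt] at hb
        have hne : dist y x ≠ h := fun he => h3 (by rwa [mem_sphere])
        have : h < dist y x := lt_of_le_of_ne hb (Ne.symm hne)
        rw [hn] at hcb
        exact absurd hcb (not_le.mpr this)
      · rw [mem_closedBall] at hb
        have hne : dist y x ≠ δ := fun he => h2 (by rwa [mem_sphere])
        have hlt : dist y x < δ := lt_of_le_of_ne hb hne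
        rw [hn] at hnb
        exact hnb hlt
  -- per-term estimate
  have key : ∀ i ∈ R x h,
      |(∫ y in σ i, w (x - y)) - V i x * w (x - a i)| ≤ (Lw * rσ) * V i x := by
    intro i hiR
    obtain ⟨hdi, hik⟩ := (hR x h i).mp hiR
    -- δ ≤ dist x (a i)
    have h2δ : 2 * δ ≤ dist (a k) (a i) := by
      by_contra hcon; push_neg at hcon
      set m := midpoint ℝ (a k) (a i) with hm
      have hmb : m ∈ ball (a k) δ := by
        rw [mem_ball, dist_midpoint_left]
        simp only [Real.norm_ofNat]
        linarith
      have hmσ := (hBδ hmb).1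
      rw [hσ] at hmσ
      have := hmσ.2 i hik
      rw [dist_midpoint_left, dist_midpoint_right] at this
      exact absurd this (lt_irrefl _)
    have hδi : δ ≤ dist x (a i) := by
      have htri := dist_triangle (a k) x (a i)
      have hxk : dist (a k) x < δ := by rw [dist_comm]; exact mem_ball.mp hx
      linarith
    have hxai : x - a i ∈ closure (Ann h δ 0) := by
      apply mem_closure_ann hδ
      · rwa [← dist_eq_norm]
      · rwa [← dist_eq_norm]
    have hxyAnn : ∀ y ∈ I i, x - y ∈ Ann h δ 0 := by
      intro y hy
      obtain ⟨hy1, hy2⟩ := hy.2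
      constructor
      · rw [mem_ball_zero_iff, ← dist_eq_norm]
        rw [mem_ball] at hy1; rw [dist_comm]; exact hy1
      · intro hc
        rw [mem_closedBall_zero_iff, ← dist_eq_norm] at hc
        exact hy2 (mem_closedBall.mpr (by rw [dist_comm]; exact hc))
    -- integrability on I i
    have hfint : IntegrableOn f (I i) volume := by
      refine Integrable.mono' (g := fun _ => M)
        (integrableOn_const (hIfin i).ne) (hfm.restrict) ?_
      refine (ae_restrict_iff' (hImeas i)).mpr (Filter.Eventually.of_forall fun y hy => ?_)
      exact hM _ (subset_closure (hxyAnn y hy))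
    -- step A : integral over σ i localizes to I i
    have hA : (∫ y in σ i, w (x - y)) = ∫ y in I i, f y := by
      calc (∫ y in σ i, w (x - y)) = ∫ y in σ i, (Ann h δ x).indicator f y :=
            integral_congr_ae (ae_restrict_of_ae hindic)
        _ = ∫ y in σ i ∩ Ann h δ x, f y :=
            setIntegral_indicator (ann_open h δ x).measurableSet
    -- step B
    have hconst : V i x * w (x - a i) = ∫ _ in I i, w (x - a i) := by
      rw [setIntegral_const, hV, smul_eq_mul, measureReal_def]
    have hcint : IntegrableOn (fun _ => w (x - a i)) (I i) volume :=
      integrableOn_const (hIfin i).ne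
    have hsub : (∫ y in I i, f y) - V i x * w (x - a i)
        = ∫ y in I i, (f y - w (x - a i)) := by
      rw [hconst, ← integral_sub hfint hcint]
    have hbound : ∀ y ∈ I i, ‖f y - w (x - a i)‖ ≤ Lw * rσ := by
      intro y hy
      have hyr : dist y (a i) ≤ rσ := hrσ.2 ⟨i, y, subset_closure hy.1, rfl⟩
      have hlip := hwLip (x - y) (subset_closure (hxyAnn y hy)) (x - a i) hxai
      rw [Real.norm_eq_abs]
      refine hlip.trans ?_
      have hdd : dist (x - y) (x - a i) = dist y (a i) := by
        rw [dist_eq_norm, sub_sub_sub_cancel_left, ← dist_eq_norm, dist_comm]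
      rw [hdd]
      exact mul_le_mul_of_nonneg_left hyr hLw.le
    have hest : ‖∫ y in I i, (f y - w (x - a i))‖ ≤ (Lw * rσ) * (volume (I i)).toReal :=
      norm_setIntegral_le_of_norm_le_const (hIfin i) hbound
    rw [hA, hsub, hV, ← Real.norm_eq_abs]
    exact hest
  -- sum the estimates
  have hsum : |(∑ i ∈ R x h, ∫ y in σ i, w (x - y)) - ∑ i ∈ R x h, V i x * w (x - a i)|
      ≤ (Lw * rσ) * ∑ i ∈ R x h, V i x := by
    rw [← Finset.sum_sub_distrib, Finset.mul_sum]
    exact (Finset.abs_sum_le_sum_abs _ _).trans (Finset.sum_le_sum key)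
  -- total volume bound
  have hVsum : ∑ i ∈ R x h, V i x ≤ Real.pi * h ^ 2 := by
    have hdisj : (↑(R x h) : Set (Fin N)).Pairwise (Function.onFun Disjoint I) := by
      intro i _ j _ hij
      exact Disjoint.mono inter_subset_left inter_subset_left (hσdisj i j hij)
    have h1 : ∑ i ∈ R x h, V i x = (volume (⋃ i ∈ R x h, I i)).toReal := by
      rw [measure_biUnion_finset hdisj (fun i _ => hImeas i),
        ENNReal.toReal_sum (fun i _ => (hIfin i).ne)]
      simp_rw [hV]
      rfl
    have h2 : volume (⋃ i ∈ R x h, I i) ≤ volume (ball x h) :=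
      measure_mono (Set.iUnion₂_subset fun i _ => hIball i)
    rw [h1, ← e2_volume_ball x h hh0]
    exact ENNReal.toReal_mono measure_ball_lt_top.ne h2
  calc |(∑ i ∈ R x h, ∫ y in σ i, w (x - y)) - ∑ i ∈ R x h, V i x * w (x - a i)|
      ≤ (Lw * rσ) * ∑ i ∈ R x h, V i x := hsum
    _ ≤ (Lw * rσ) * (Real.pi * h ^ 2) := mul_le_mul_of_nonneg_left hVsum hLrσ
    _ = Real.pi * Lw * rσ * h ^ 2 := by ring
end
end

section
/- Under the stated setup, let w be a weight function. Then for each f ∈ C²(closure(Ω_H)), one has |∇f(a_k) − ∇_h f(a_k)| ≤ 4h|f|_{C²}, where ∇f(a_k) is the usual gradient of f at a_k. -/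
open MeasureTheory Metric Set

noncomputable section

/-! ### Auxiliary lemmas -/

section Aux

lemma e2_decomp (u : E2) : u = u 0 • EuclideanSpace.single 0 1 + u 1 • EuclideanSpace.single 1 1 := by
  ext i
  fin_cases i <;> simp [EuclideanSpace.single_apply]

lemma e2_abs_sum (u : E2) : |u 0| + |u 1| ≤ Real.sqrt 2 * ‖u‖ := by
  have h1 : ‖u‖ = Real.sqrt (‖u 0‖^2 + ‖u 1‖^2) := by
    rw [EuclideanSpace.norm_eq, Fin.sum_univ_two]
  have h2 : ‖u‖^2 = (u 0)^2 + (u 1)^2 := by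
    rw [h1, Real.sq_sqrt (by positivity)]; simp [Real.norm_eq_abs, sq_abs]
  have h3 : (0:ℝ) ≤ ‖u‖ := norm_nonneg _
  have h4 : Real.sqrt 2 ^ 2 = 2 := Real.sq_sqrt (by norm_num)
  have h5 : (0:ℝ) ≤ Real.sqrt 2 := Real.sqrt_nonneg _
  have hsq : (|u 0| + |u 1|)^2 ≤ (Real.sqrt 2 * ‖u‖)^2 := by
    have e1 : (Real.sqrt 2 * ‖u‖)^2 = 2 * ((u 0)^2 + (u 1)^2) := by
      rw [mul_pow, h4, h2]
    rw [e1]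
    nlinarith [sq_nonneg (|u 0| - |u 1|), sq_abs (u 0), sq_abs (u 1)]
  exact (pow_le_pow_iff_left₀ (by positivity) (by positivity) two_ne_zero).mp hsq

lemma bilin_bound (B : E2 →L[ℝ] E2 →L[ℝ] ℝ) (M : ℝ)
    (hB : ∀ i j : Fin 2, |B (EuclideanSpace.single i 1) (EuclideanSpace.single j 1)| ≤ M) :
    ‖B‖ ≤ 2 * M := by
  have hM : 0 ≤ M := le_trans (abs_nonneg _) (hB 0 0)
  apply ContinuousLinearMap.opNorm_le_bound _ (by linarith)
  intro u
  apply ContinuousLinearMap.opNorm_le_bound _ (by positivity)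
  intro v
  set c00 := B (EuclideanSpace.single 0 1) (EuclideanSpace.single 0 1)
  set c01 := B (EuclideanSpace.single 0 1) (EuclideanSpace.single 1 1)
  set c10 := B (EuclideanSpace.single 1 1) (EuclideanSpace.single 0 1)
  set c11 := B (EuclideanSpace.single 1 1) (EuclideanSpace.single 1 1)
  have expand : B u v = u 0 * v 0 * c00 + u 0 * v 1 * c01 + u 1 * v 0 * c10 + u 1 * v 1 * c11 := by
    conv_lhs => rw [e2_decomp u, e2_decomp v]
    simp only [map_add, ContinuousLinearMap.map_smul, ContinuousLinearMap.add_apply,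
      ContinuousLinearMap.smul_apply, ContinuousLinearMap.coe_smul', Pi.smul_apply, smul_eq_mul,
      _root_.map_smul]
    ring
  have t : ∀ (x y c : ℝ), |c| ≤ M → |x * y * c| ≤ |x| * |y| * M := by
    intro x y c hc
    rw [abs_mul, abs_mul]
    exact mul_le_mul_of_nonneg_left hc (by positivity)
  have b00 := t (u 0) (v 0) c00 (hB 0 0)
  have b01 := t (u 0) (v 1) c01 (hB 0 1)
  have b10 := t (u 1) (v 0) c10 (hB 1 0)
  have b11 := t (u 1) (v 1) c11 (hB 1 1)
  have habs : |B u v| ≤ |u 0| * |v 0| * M + |u 0| * |v 1| * M + |u 1| * |v 0| * M + |u 1| * |v 1| * M := by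
    rw [expand]
    calc |u 0 * v 0 * c00 + u 0 * v 1 * c01 + u 1 * v 0 * c10 + u 1 * v 1 * c11|
        ≤ |u 0 * v 0 * c00 + u 0 * v 1 * c01 + u 1 * v 0 * c10| + |u 1 * v 1 * c11| := abs_add_le _ _
      _ ≤ (|u 0 * v 0 * c00 + u 0 * v 1 * c01| + |u 1 * v 0 * c10|) + |u 1 * v 1 * c11| := by
          gcongr; exact abs_add_le _ _
      _ ≤ ((|u 0 * v 0 * c00| + |u 0 * v 1 * c01|) + |u 1 * v 0 * c10|) + |u 1 * v 1 * c11| := by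
          gcongr; exact abs_add_le _ _
      _ ≤ _ := by linarith
  have h2 : (|u 0| + |u 1|) * (|v 0| + |v 1|) ≤ 2 * (‖u‖ * ‖v‖) := by
    have hu := e2_abs_sum u
    have hv := e2_abs_sum v
    have h4 : Real.sqrt 2 * Real.sqrt 2 = 2 := Real.mul_self_sqrt (by norm_num)
    calc (|u 0| + |u 1|) * (|v 0| + |v 1|) ≤ (Real.sqrt 2 * ‖u‖) * (Real.sqrt 2 * ‖v‖) :=
          mul_le_mul hu hv (by positivity) (by positivity)
      _ = (Real.sqrt 2 * Real.sqrt 2) * (‖u‖ * ‖v‖) := by ring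
      _ = 2 * (‖u‖ * ‖v‖) := by rw [h4]
  have : |B u v| ≤ M * ((|u 0| + |u 1|) * (|v 0| + |v 1|)) := by nlinarith
  calc ‖B u v‖ = |B u v| := Real.norm_eq_abs _
    _ ≤ M * ((|u 0| + |u 1|) * (|v 0| + |v 1|)) := this
    _ ≤ M * (2 * (‖u‖ * ‖v‖)) := mul_le_mul_of_nonneg_left h2 hM
    _ = 2 * M * ‖u‖ * ‖v‖ := by ring

lemma pd_snd (f : E2 → ℝ) (U : Set E2) (hU : IsOpen U) (hf : ContDiffOn ℝ 2 f U)
    (x : E2) (hx : x ∈ U) (i j : Fin 2) :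
    pd i (pd j f) x
      = fderiv ℝ (fderiv ℝ f) x (EuclideanSpace.single i 1) (EuclideanSpace.single j 1) := by
  have hf1 : ContDiffOn ℝ 1 (fderiv ℝ f) U := hf.fderiv_of_isOpen hU (by norm_num)
  have hd2 : DifferentiableAt ℝ (fderiv ℝ f) x :=
    (hf1.differentiableOn one_ne_zero).differentiableAt (hU.mem_nhds hx)
  have : pd j f = fun y => (fderiv ℝ f y) (EuclideanSpace.single j 1) := rfl
  rw [pd, this, fderiv_clm_apply hd2 (differentiableAt_const _)]
  simp

lemma pd_snd_cont (f : E2 → ℝ) (U : Set E2) (hU : IsOpen U) (hf : ContDiffOn ℝ 2 f U)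
    (i j : Fin 2) : ContinuousOn (pd i (pd j f)) U := by
  have hf1 : ContDiffOn ℝ 1 (fderiv ℝ f) U := hf.fderiv_of_isOpen hU (by norm_num)
  have h1 : ContDiffOn ℝ 1 (pd j f) U := by
    have : pd j f = fun y => (fderiv ℝ f y) (EuclideanSpace.single j 1) := rfl
    rw [this]
    exact hf1.clm_apply contDiffOn_const
  have h2 : ContinuousOn (fderiv ℝ (pd j f)) U := h1.continuousOn_fderiv_of_isOpen hU (le_refl 1)
  exact ((ContinuousLinearMap.apply ℝ ℝ (EuclideanSpace.single i 1)).continuous).comp_continuousOn h2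

lemma snd_symm (f : E2 → ℝ) (U : Set E2) (hU : IsOpen U) (hf : ContDiffOn ℝ 2 f U)
    (x : E2) (hx : x ∈ U) (v w : E2) :
    fderiv ℝ (fderiv ℝ f) x v w = fderiv ℝ (fderiv ℝ f) x w v := by
  have hf1 : ContDiffOn ℝ 1 (fderiv ℝ f) U := hf.fderiv_of_isOpen hU (by norm_num)
  have hd2 : DifferentiableAt ℝ (fderiv ℝ f) x :=
    (hf1.differentiableOn one_ne_zero).differentiableAt (hU.mem_nhds hx)
  have hdf : ∀ᶠ y in nhds x, HasFDerivAt f (fderiv ℝ f y) y := by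
    filter_upwards [hU.mem_nhds hx] with y hy
    exact ((hf.differentiableOn (by norm_num)).differentiableAt (hU.mem_nhds hy)).hasFDerivAt
  exact second_derivative_symmetric_of_eventually hdf hd2.hasFDerivAt v w

lemma taylor_est (f : E2 → ℝ) (U : Set E2) (hU : IsOpen U) (hf : ContDiffOn ℝ 2 f U)
    (c : E2) (r K : ℝ) (hK : 0 ≤ K) (hball : Metric.ball c r ⊆ U)
    (hM : ∀ x ∈ Metric.ball c r, ‖fderiv ℝ (fderiv ℝ f) x‖ ≤ K)
    (hc : c ∈ Metric.ball c r) :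
    ∀ y ∈ Metric.ball c r, |f c - f y - (fderiv ℝ f c) (c - y)| ≤ K * r * ‖c - y‖ := by
  intro y hy
  have hdf : ∀ x ∈ Metric.ball c r, DifferentiableAt ℝ f x := fun x hx =>
    (hf.differentiableOn (by norm_num)).differentiableAt (hU.mem_nhds (hball hx))
  have hf1 : ContDiffOn ℝ 1 (fderiv ℝ f) U := hf.fderiv_of_isOpen hU (by norm_num)
  have hdf' : ∀ x ∈ Metric.ball c r, DifferentiableAt ℝ (fderiv ℝ f) x := fun x hx =>
    (hf1.differentiableOn one_ne_zero).differentiableAt (hU.mem_nhds (hball hx))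
  have step1 : ∀ x ∈ Metric.ball c r, ‖fderiv ℝ f x - fderiv ℝ f c‖ ≤ K * r := by
    intro x hx
    have := Convex.norm_image_sub_le_of_norm_fderiv_le (𝕜 := ℝ) hdf' hM
      (convex_ball c r) hc hx
    calc ‖fderiv ℝ f x - fderiv ℝ f c‖ ≤ K * ‖x - c‖ := this
      _ ≤ K * r := by
          apply mul_le_mul_of_nonneg_left _ hK
          have := Metric.mem_ball.mp hx
          rw [← dist_eq_norm]; exact le_of_lt this
  set L := fderiv ℝ f c with hL
  set g : E2 → ℝ := fun x => f x - L x with hg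
  have hdg : ∀ x ∈ Metric.ball c r, DifferentiableAt ℝ g x := fun x hx =>
    ((hdf x hx).sub (L.differentiableAt))
  have hgd : ∀ x ∈ Metric.ball c r, ‖fderiv ℝ g x‖ ≤ K * r := by
    intro x hx
    have : fderiv ℝ g x = fderiv ℝ f x - L := by
      rw [hg]
      rw [fderiv_fun_sub (hdf x hx) L.differentiableAt, L.fderiv]
    rw [this]
    exact step1 x hx
  have mvt := Convex.norm_image_sub_le_of_norm_fderiv_le (𝕜 := ℝ) hdg hgd
    (convex_ball c r) hy hc
  have hval : g c - g y = f c - f y - L (c - y) := by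
    simp only [hg, map_sub L]
    ring
  calc |f c - f y - L (c - y)| = ‖g c - g y‖ := by rw [hval]; rfl
    _ ≤ K * r * ‖c - y‖ := mvt

/-! ### Symmetry machinery -/

def esw : E2 ≃ₗᵢ[ℝ] E2 := LinearIsometryEquiv.piLpCongrLeft 2 ℝ ℝ (Equiv.swap (0:Fin 2) 1)
def eng : E2 ≃ₗᵢ[ℝ] E2 := LinearIsometryEquiv.piLpCongrRight 2
  (fun i : Fin 2 => if i = 1 then LinearIsometryEquiv.neg ℝ else LinearIsometryEquiv.refl ℝ ℝ)

lemma esw0 (z : E2) : esw z 0 = z 1 := by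
  simp [esw, LinearIsometryEquiv.piLpCongrLeft_apply, Equiv.piCongrLeft'_apply, Equiv.swap_apply_def]
lemma esw1 (z : E2) : esw z 1 = z 0 := by
  simp [esw, LinearIsometryEquiv.piLpCongrLeft_apply, Equiv.piCongrLeft'_apply, Equiv.swap_apply_def]
lemma eng0 (z : E2) : eng z 0 = z 0 := by simp [eng, LinearIsometryEquiv.piLpCongrRight_apply]
lemma eng1 (z : E2) : eng z 1 = - z 1 := by simp [eng, LinearIsometryEquiv.piLpCongrRight_apply]

lemma e2_coord (u : E2) (i : Fin 2) : |u i| ≤ ‖u‖ := by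
  have h := abs_real_inner_le_norm (EuclideanSpace.single i (1:ℝ)) u
  simpa [EuclideanSpace.inner_single_left, EuclideanSpace.norm_single] using h

lemma e2_normsq (u : E2) : ‖u‖^2 = u 0 ^ 2 + u 1 ^ 2 := by
  rw [EuclideanSpace.norm_eq, Fin.sum_univ_two, Real.sq_sqrt (by positivity)]
  simp [Real.norm_eq_abs, sq_abs]

section radial
variable (h δ : ℝ)

lemma ann_meas (x : E2) : MeasurableSet (Ann h δ x) :=
  measurableSet_ball.diff measurableSet_closedBall

lemma mem_ann_zero (z : E2) : z ∈ Ann h δ 0 ↔ δ < ‖z‖ ∧ ‖z‖ < h := by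
  simp only [Ann, mem_diff, mem_ball_zero_iff, Metric.mem_closedBall, dist_zero_right, not_le]
  tauto

lemma mem_ann (c z : E2) : z ∈ Ann h δ c ↔ δ < dist z c ∧ dist z c < h := by
  simp only [Ann, mem_diff, Metric.mem_ball, Metric.mem_closedBall, not_le]
  tauto

lemma ann_img (e : E2 ≃ₗᵢ[ℝ] E2) : e '' Ann h δ 0 = Ann h δ 0 := by
  ext z
  constructor
  · rintro ⟨y, hy, rfl⟩
    rw [mem_ann_zero] at hy ⊢
    rwa [e.norm_map]
  · intro hz
    refine ⟨e.symm z, ?_, by simp⟩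
    rw [mem_ann_zero] at hz ⊢
    rwa [e.symm.norm_map]

lemma ann_chg (e : E2 ≃ₗᵢ[ℝ] E2) (F : E2 → ℝ) :
    ∫ z in Ann h δ 0, F z = ∫ z in Ann h δ 0, F (e z) := by
  conv_lhs => rw [← ann_img h δ e]
  exact e.measurePreserving.setIntegral_image_emb e.toHomeomorph.measurableEmbedding F _

variable {h δ} (hdel : 0 < δ) (w : E2 → ℝ) (wrad : ℝ → ℝ)
  (hwInt : IntegrableOn w (Ann h δ 0))
  (hrad : ∀ᵐ z : E2, z ∈ Ann h δ 0 → w z = wrad ‖z‖)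

include hdel hwInt

lemma psi_int (G : E2) :
    IntegrableOn (fun z : E2 => ((inner ℝ G z : ℝ) * w z / ‖z‖ ^ 2) • z) (Ann h δ 0) := by
  set A := Ann h δ 0 with hA
  have hAmeas : MeasurableSet A := ann_meas h δ 0
  have hApos : ∀ z ∈ A, 0 < ‖z‖ := fun z hz => lt_of_le_of_lt hdel.le ((mem_ann_zero h δ z).mp hz).1
  set Ψ : E2 → E2 := fun z => ((inner ℝ G z : ℝ) * w z / ‖z‖ ^ 2) • z with hΨ
  have hsc_meas : Measurable (fun z : E2 => (inner ℝ G z : ℝ) / ‖z‖ ^ 2) := by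
    have : Continuous (fun z : E2 => (inner ℝ G z : ℝ)) := Continuous.inner continuous_const continuous_id
    exact this.measurable.div ((continuous_norm.pow 2).measurable)
  have hΨmeas : AEStronglyMeasurable Ψ (volume.restrict A) := by
    refine AEStronglyMeasurable.smul (f := fun z : E2 => (inner ℝ G z : ℝ) * w z / ‖z‖ ^ 2) (g := id) ?_ ?_
    · have : (fun z : E2 => (inner ℝ G z : ℝ) * w z / ‖z‖ ^ 2)
          = fun z => ((inner ℝ G z : ℝ) / ‖z‖ ^ 2) * w z := by funext z; ring
      rw [this]
      exact (hsc_meas.aestronglyMeasurable).mul hwInt.aestronglyMeasurable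
    · exact aestronglyMeasurable_id
  apply Integrable.mono (Integrable.const_mul hwInt ‖G‖) hΨmeas
  rw [ae_restrict_iff' hAmeas]
  apply ae_of_all
  intro z hz
  have hz0 : 0 < ‖z‖ := hApos z hz
  have hb : |(inner ℝ G z : ℝ)| ≤ ‖G‖ * ‖z‖ := abs_real_inner_le_norm G z
  calc ‖Ψ z‖ = |(inner ℝ G z : ℝ) * w z / ‖z‖ ^ 2| * ‖z‖ := by
        rw [hΨ]; rw [norm_smul, Real.norm_eq_abs]
    _ = |(inner ℝ G z : ℝ)| * |w z| / ‖z‖ ^ 2 * ‖z‖ := by rw [abs_div, abs_mul, abs_pow, abs_norm]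
    _ ≤ (‖G‖ * ‖z‖) * |w z| / ‖z‖ ^ 2 * ‖z‖ := by gcongr
    _ = ‖G‖ * |w z| := by field_simp
    _ ≤ ‖‖G‖ * w z‖ := by rw [Real.norm_eq_abs, abs_mul, abs_norm]

include hrad

lemma radial_identity (G : E2) :
    ∫ z in Ann h δ 0, ((inner ℝ G z : ℝ) * w z / ‖z‖ ^ 2) • z
      = ((∫ z in Ann h δ 0, w z) / 2) • G := by
  set A := Ann h δ 0 with hA
  have hAmeas : MeasurableSet A := ann_meas h δ 0
  have hApos : ∀ z ∈ A, 0 < ‖z‖ := fun z hz => lt_of_le_of_lt hdel.le ((mem_ann_zero h δ z).mp hz).1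
  have hwcong : ∀ e : E2 ≃ₗᵢ[ℝ] E2, ∀ᵐ z : E2, z ∈ A → w (e z) = w z := by
    intro e
    have h1 : ∀ᵐ z : E2, e z ∈ A → w (e z) = wrad ‖e z‖ :=
      e.measurePreserving.quasiMeasurePreserving.ae hrad
    filter_upwards [h1, hrad] with z hz1 hz2 hzA
    have hezA : e z ∈ A := by rw [hA, mem_ann_zero] at hzA ⊢; rwa [e.norm_map]
    rw [hz1 hezA, e.norm_map, ← hz2 hzA]
  have hmeas1 : ∀ i j : Fin 2, Measurable (fun z : E2 => z i * z j / ‖z‖ ^ 2) := by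
    intro i j
    have hc : ∀ i : Fin 2, Continuous (fun z : E2 => z i) :=
      fun i => (EuclideanSpace.proj i).continuous
    exact (((hc i).mul (hc j)).measurable).div ((continuous_norm.pow 2).measurable)
  have hFint : ∀ i j : Fin 2, IntegrableOn (fun z : E2 => z i * z j / ‖z‖ ^ 2 * w z) A := by
    intro i j
    apply Integrable.mono hwInt
    · exact ((hmeas1 i j).aestronglyMeasurable).mul hwInt.aestronglyMeasurable
    · rw [ae_restrict_iff' hAmeas]
      apply ae_of_all
      intro z hz
      have hz0 : 0 < ‖z‖ := hApos z hz
      have hb : |z i * z j / ‖z‖ ^ 2| ≤ 1 := by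
        rw [abs_div, abs_mul, abs_pow, abs_norm]
        apply div_le_one_of_le₀ _ (by positivity)
        calc |z i| * |z j| ≤ ‖z‖ * ‖z‖ :=
              mul_le_mul (e2_coord z i) (e2_coord z j) (abs_nonneg _) (norm_nonneg _)
          _ = ‖z‖ ^ 2 := by ring
      calc ‖z i * z j / ‖z‖ ^ 2 * w z‖ = |z i * z j / ‖z‖ ^ 2| * |w z| := abs_mul _ _
        _ ≤ 1 * |w z| := by gcongr
        _ = ‖w z‖ := by rw [one_mul]; rfl
  set M : Fin 2 → Fin 2 → ℝ := fun i j => ∫ z in A, z i * z j / ‖z‖ ^ 2 * w z with hM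
  have hM01 : M 0 1 = 0 := by
    have h1 : M 0 1 = ∫ z in A, -(z 0 * z 1 / ‖z‖ ^ 2 * w z) := by
      rw [hM]
      simp only
      rw [ann_chg h δ eng (fun z => z 0 * z 1 / ‖z‖ ^ 2 * w z)]
      apply setIntegral_congr_ae hAmeas
      filter_upwards [hwcong eng] with z hw hzA
      rw [eng0, eng1, eng.norm_map, hw hzA]
      ring
    rw [integral_neg] at h1
    have h2 : M 0 1 = - M 0 1 := h1
    linarith
  have hM10 : M 1 0 = M 0 1 := by
    rw [hM]; simp only
    apply setIntegral_congr_fun hAmeas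
    intro z _
    ring
  have hMsw : M 0 0 = M 1 1 := by
    rw [hM]; simp only
    rw [ann_chg h δ esw (fun z => z 0 * z 0 / ‖z‖ ^ 2 * w z)]
    apply setIntegral_congr_ae hAmeas
    filter_upwards [hwcong esw] with z hw hzA
    rw [esw0, esw.norm_map, hw hzA]
  have htr : M 0 0 + M 1 1 = ∫ z in A, w z := by
    rw [hM]; simp only
    rw [← integral_add (hFint 0 0) (hFint 1 1)]
    apply setIntegral_congr_fun hAmeas
    intro z hz
    have hz0 : (0:ℝ) < ‖z‖ := hApos z hz
    have hnsq : ‖z‖ ^ 2 = z 0 ^ 2 + z 1 ^ 2 := e2_normsq z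
    field_simp
    rw [hnsq]
    ring
  have hM00 : M 0 0 = (∫ z in A, w z) / 2 := by linarith
  have hM11 : M 1 1 = (∫ z in A, w z) / 2 := by linarith
  set Ψ : E2 → E2 := fun z => ((inner ℝ G z : ℝ) * w z / ‖z‖ ^ 2) • z with hΨ
  have hΨint : IntegrableOn Ψ A := psi_int hdel w hwInt G
  have hcoord : ∀ j : Fin 2, (∫ z in A, Ψ z) j = G 0 * M 0 j + G 1 * M 1 j := by
    intro j
    have h1 : (∫ z in A, Ψ z) j = EuclideanSpace.proj j (∫ z in A, Ψ z) := rfl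
    rw [h1, ← ContinuousLinearMap.integral_comp_comm _ hΨint]
    have h2 : ∀ z : E2, EuclideanSpace.proj j (Ψ z)
        = G 0 * (z 0 * z j / ‖z‖ ^ 2 * w z) + G 1 * (z 1 * z j / ‖z‖ ^ 2 * w z) := by
      intro z
      have : EuclideanSpace.proj j (Ψ z) = ((inner ℝ G z : ℝ) * w z / ‖z‖ ^ 2) * z j := rfl
      rw [this, PiLp.inner_apply, Fin.sum_univ_two]
      simp only [RCLike.inner_apply, starRingEnd_apply, star_trivial]
      ring
    calc (∫ z in A, EuclideanSpace.proj j (Ψ z))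
        = ∫ z in A, (G 0 * (z 0 * z j / ‖z‖ ^ 2 * w z) + G 1 * (z 1 * z j / ‖z‖ ^ 2 * w z)) := by
          apply setIntegral_congr_fun hAmeas; intro z _; exact h2 z
      _ = G 0 * M 0 j + G 1 * M 1 j := by
          rw [integral_add ((hFint 0 j).const_mul _) ((hFint 1 j).const_mul _),
            integral_const_mul, integral_const_mul]
  have H0 : (∫ z in A, Ψ z) 0 = (((∫ z in A, w z) / 2) • G) 0 := by
    have hrhs : (((∫ z in A, w z) / 2) • G) 0 = (∫ z in A, w z) / 2 * G 0 := rfl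
    rw [hcoord 0, hrhs, hM10, hM01, hM00]
    ring
  have H1 : (∫ z in A, Ψ z) 1 = (((∫ z in A, w z) / 2) • G) 1 := by
    have hrhs : (((∫ z in A, w z) / 2) • G) 1 = (∫ z in A, w z) / 2 * G 1 := rfl
    rw [hcoord 1, hrhs, hM01, hM11]
    ring
  ext j
  fin_cases j
  · exact H0
  · exact H1

end radial

lemma psi2_int {h δ : ℝ} (hdel : 0 < δ) (w ρ : E2 → ℝ)
    (hwInt : IntegrableOn w (Ann h δ 0)) (hρcont : ContinuousOn ρ (Ann h δ 0))
    (C : ℝ) (hC : 0 ≤ C) (hρb : ∀ z ∈ Ann h δ 0, |ρ z| ≤ C * ‖z‖) :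
    IntegrableOn (fun z : E2 => (ρ z * w z / ‖z‖ ^ 2) • z) (Ann h δ 0) := by
  set A := Ann h δ 0 with hA
  have hAmeas : MeasurableSet A := ann_meas h δ 0
  have hApos : ∀ z ∈ A, 0 < ‖z‖ := fun z hz => lt_of_le_of_lt hdel.le ((mem_ann_zero h δ z).mp hz).1
  set Ψ : E2 → E2 := fun z => (ρ z * w z / ‖z‖ ^ 2) • z with hΨ
  have hΨmeas : AEStronglyMeasurable Ψ (volume.restrict A) := by
    refine AEStronglyMeasurable.smul (f := fun z : E2 => ρ z * w z / ‖z‖ ^ 2) (g := id) ?_ ?_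
    · have hn : Measurable (fun z : E2 => (‖z‖ ^ 2)⁻¹) := (continuous_norm.pow 2).measurable.inv
      have hfun : (fun z : E2 => ρ z * w z / ‖z‖ ^ 2)
          = fun z => (ρ z * w z) * (‖z‖ ^ 2)⁻¹ := by
        funext z; rw [div_eq_mul_inv]
      rw [hfun]
      exact ((hρcont.aestronglyMeasurable hAmeas).mul hwInt.aestronglyMeasurable).mul
        hn.aestronglyMeasurable
    · exact aestronglyMeasurable_id
  apply Integrable.mono (Integrable.const_mul hwInt C) hΨmeas
  rw [ae_restrict_iff' hAmeas]
  apply ae_of_all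
  intro z hz
  have hz0 : 0 < ‖z‖ := hApos z hz
  have hb := hρb z hz
  calc ‖Ψ z‖ = |ρ z * w z / ‖z‖ ^ 2| * ‖z‖ := by rw [hΨ]; simp only; rw [norm_smul, Real.norm_eq_abs]
    _ = |ρ z| * |w z| / ‖z‖ ^ 2 * ‖z‖ := by rw [abs_div, abs_mul, abs_pow, abs_norm]
    _ ≤ (C * ‖z‖) * |w z| / ‖z‖ ^ 2 * ‖z‖ := by gcongr
    _ = C * |w z| := by field_simp
    _ ≤ ‖C * w z‖ := by
        rw [Real.norm_eq_abs, abs_mul, abs_of_nonneg hC]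

lemma w_integrable (h δ : ℝ) (w : E2 → ℝ) (hwLinf : MemLp w ⊤ volume)
    (hwSupp : ∀ᵐ x ∂volume, x ∉ closure (Ann h δ 0) → w x = 0) : Integrable w volume := by
  set K := closure (Ann h δ 0) with hK
  have hKm : MeasurableSet K := isClosed_closure.measurableSet
  have hsub : K ⊆ Metric.closedBall 0 h :=
    closure_minimal (Subset.trans diff_subset ball_subset_closedBall) Metric.isClosed_closedBall
  have hKfin : volume K < ⊤ := lt_of_le_of_lt (measure_mono hsub) measure_closedBall_lt_top
  haveI : Fact (volume K < ⊤) := ⟨hKfin⟩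
  have h1 : MemLp w ⊤ (volume.restrict K) := hwLinf.restrict K
  have h2 : MemLp w 1 (volume.restrict K) := h1.mono_exponent le_top
  have h3 : IntegrableOn w K := memLp_one_iff_integrable.mp h2
  have h4 : Integrable (K.indicator w) volume := h3.integrable_indicator hKm
  apply h4.congr
  filter_upwards [hwSupp] with x hx
  by_cases hxK : x ∈ K
  · rw [indicator_of_mem hxK]
  · rw [indicator_of_notMem hxK, hx hxK]

lemma ann_null_diff (h δ : ℝ) (hδ : 0 < δ) :
    volume (closure (Ann h δ 0) \ Ann h δ 0) = 0 := by
  have hsub : closure (Ann h δ 0) \ Ann h δ 0 ⊆ Metric.sphere 0 h ∪ Metric.sphere 0 δ := by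
    intro z ⟨hz1, hz2⟩
    have hcl : closure (Ann h δ 0) ⊆ Metric.closedBall 0 h ∩ {y : E2 | δ ≤ ‖y‖} := by
      apply closure_minimal _ (Metric.isClosed_closedBall.inter (isClosed_le continuous_const continuous_norm))
      intro y ⟨hy1, hy2⟩
      refine ⟨ball_subset_closedBall hy1, ?_⟩
      show δ ≤ ‖y‖
      have : ¬ (‖y‖ ≤ δ) := by simpa [Metric.mem_closedBall, dist_zero_right] using hy2
      linarith [not_le.mp this]
    obtain ⟨hzb, hzd⟩ := hcl hz1
    rw [Metric.mem_closedBall, dist_zero_right] at hzb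
    simp only [mem_setOf_eq] at hzd
    have : ¬(‖z‖ < h ∧ δ < ‖z‖) := by
      intro ⟨h1, h2⟩
      exact hz2 ⟨by rwa [mem_ball_zero_iff], by simpa [Metric.mem_closedBall, dist_zero_right, not_le] using h2⟩
    rcases not_and_or.mp this with h1 | h2
    · left; simp [Metric.mem_sphere, dist_zero_right]; linarith [not_lt.mp h1]
    · right; simp [Metric.mem_sphere, dist_zero_right]; linarith [not_lt.mp h2]
  apply measure_mono_null hsub
  rw [measure_union_null_iff]
  exact ⟨Measure.addHaar_sphere volume 0 h, Measure.addHaar_sphere volume 0 δ⟩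

lemma w_total (h δ : ℝ) (hδ : 0 < δ) (w : E2 → ℝ)
    (hwSupp : ∀ᵐ x ∂volume, x ∉ closure (Ann h δ 0) → w x = 0) :
    ∫ z in Ann h δ 0, w z = ∫ z, w z := by
  apply setIntegral_eq_integral_of_ae_compl_eq_zero
  have hnull : ∀ᵐ x ∂(volume : Measure E2), x ∉ closure (Ann h δ 0) \ Ann h δ 0 :=
    measure_eq_zero_iff_ae_notMem.mp (ann_null_diff h δ hδ)
  filter_upwards [hwSupp, hnull] with x h1 h2 hxA
  by_cases hxc : x ∈ closure (Ann h δ 0)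
  · exact absurd ⟨hxc, hxA⟩ h2
  · exact h1 hxc

end Aux

set_option maxHeartbeats 2000000 in
/-- Lemma 4.1: `|∇f(a_k) - ∇_h f(a_k)| ≤ 4h |f|_{C²}`. -/
theorem gradient_integral_estimate
    (Ω : Set E2) (hΩo : IsOpen Ω) (hΩb : Bornology.IsBounded Ω) (hΩc : IsConnected Ω)
    (H : ℝ) (hH : 0 < H)
    (N : ℕ) (a : Fin N → E2) (ha : Function.Injective a)
    (ΩH : Set E2) (hΩH : ΩH = {x : E2 | ∃ y ∈ Ω, dist x y < H})
    (haΩH : ∀ i, a i ∈ ΩH)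
    (σ : Fin N → Set E2)
    (hσ : ∀ i, σ i = {x ∈ ΩH | ∀ j, j ≠ i → dist x (a i) < dist x (a j)})
    (rσ : ℝ)
    (hrσ : IsGreatest {d : ℝ | ∃ i, ∃ y ∈ closure (σ i), d = dist y (a i)} rσ)
    (hrσH : rσ < H)
    (h : ℝ) (hrh : rσ < h) (hhH : h < H)
    (k : Fin N) (hak : a k ∈ σ k ∩ Ω)
    (δ : ℝ) (hδ : 0 < δ) (hBδ : Metric.ball (a k) δ ⊆ σ k ∩ Ω)
    (R : E2 → ℝ → Finset (Fin N))
    (hR : ∀ x r i, i ∈ R x r ↔ dist x (a i) < r ∧ i ≠ k)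
    (V : Fin N → E2 → ℝ)
    (hV : ∀ i x, V i x = (volume (σ i ∩ Ann h δ x)).toReal)
    (hcov : ∀ x ∈ Metric.ball (a k) δ,
      Metric.ball x (h + rσ) ⊆ ΩH ∧
      Metric.ball x h ⊆ ⋃ i ∈ {i : Fin N | dist x (a i) < h}, closure (σ i))
    (w : E2 → ℝ) (Lw C₀ : ℝ) (wrad : ℝ → ℝ)
    (hwLinf : MemLp w ⊤ volume)
    (hwCont : ContinuousOn w (closure (Ann h δ 0)))
    (hwNonneg : ∀ᵐ x ∂volume, 0 ≤ w x)
    (hwSupp : ∀ᵐ x ∂volume, x ∉ closure (Ann h δ 0) → w x = 0)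
    (hLw : 0 < Lw)
    (hwLip : ∀ x ∈ closure (Ann h δ 0), ∀ y ∈ closure (Ann h δ 0), |w x - w y| ≤ Lw * dist x y)
    (hwrad : IntegrableOn wrad (Set.Ioo δ h))
    (hwRad : ∀ᵐ x ∂volume, x ∈ Ann h δ 0 → w x = wrad ‖x‖)
    (hC₀ : 0 < C₀)
    (hwLB : ∀ x ∈ Metric.ball (a k) δ,
      C₀ ≤ (∑ i ∈ R x h, ∫ y in σ i, w (x - y)) ∧
      C₀ ≤ ∑ j ∈ R x h, V j x * w (x - a j))
    (f : E2 → ℝ) (U' : Set E2) (hU'o : IsOpen U') (hU'sub : closure ΩH ⊆ U')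
    (hf : ContDiffOn ℝ 2 f U')
 :
    ‖gradient f (a k) - ((2 / ∫ z in Ann h δ 0, w z) • ∫ y in Ann h δ (a k), (((f (a k) - f y) * w (a k - y)) / ‖a k - y‖ ^ 2) • (a k - y))‖ ≤ 4 * h * CjSemi ΩH 2 f := by
  classical
  set G : E2 := gradient f (a k) with hG
  set CM : ℝ := CjSemi ΩH 2 f with hCM
  set A : Set E2 := Ann h δ 0 with hAdef
  have hAmeas : MeasurableSet A := ann_meas h δ 0
  -- basic positivity
  have hrσ0 : 0 ≤ rσ := by
    have : (0:ℝ) ∈ {d : ℝ | ∃ i, ∃ y ∈ closure (σ i), d = dist y (a i)} :=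
      ⟨k, a k, subset_closure hak.1, (dist_self (a k)).symm⟩
    exact hrσ.2 this
  have hh0 : 0 < h := lt_of_le_of_lt hrσ0 hrh
  -- ΩH is open and bounded
  have hΩHopen : IsOpen ΩH := by
    rw [hΩH]
    have : {x : E2 | ∃ y ∈ Ω, dist x y < H} = ⋃ y ∈ Ω, Metric.ball y H := by
      ext x; simp [Metric.mem_ball]
    rw [this]
    exact isOpen_biUnion fun y _ => Metric.isOpen_ball
  have hΩHbdd : Bornology.IsBounded ΩH := by
    rw [hΩH]
    apply Bornology.IsBounded.subset (hΩb.thickening (δ := H))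
    intro x hx
    obtain ⟨y, hy, hxy⟩ := hx
    rw [Metric.mem_thickening_iff]
    exact ⟨y, hy, hxy⟩
  have hcomp : IsCompact (closure ΩH) :=
    Metric.isCompact_of_isClosed_isBounded isClosed_closure hΩHbdd.closure
  -- the ball around a k lies in ΩH and U'
  have hballΩH : Metric.ball (a k) h ⊆ ΩH := by
    intro x hx
    apply (hcov (a k) (Metric.mem_ball_self hδ)).1
    exact Metric.ball_subset_ball (by linarith) hx
  have hballU : Metric.ball (a k) h ⊆ U' := fun x hx => hU'sub (subset_closure (hballΩH hx))
  -- boundedness of second derivatives: CjSemi facts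
  have hcont20 : ContinuousOn (pd 0 (pd 0 f)) (closure ΩH) :=
    (pd_snd_cont f U' hU'o hf 0 0).mono hU'sub
  have hcont11 : ContinuousOn (pd 0 (pd 1 f)) (closure ΩH) :=
    (pd_snd_cont f U' hU'o hf 0 1).mono hU'sub
  have hcont02 : ContinuousOn (pd 1 (pd 1 f)) (closure ΩH) :=
    (pd_snd_cont f U' hU'o hf 1 1).mono hU'sub
  obtain ⟨C1, hC1⟩ := hcomp.exists_bound_of_continuousOn hcont20
  obtain ⟨C2, hC2⟩ := hcomp.exists_bound_of_continuousOn hcont11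
  obtain ⟨C3, hC3⟩ := hcomp.exists_bound_of_continuousOn hcont02
  have hD20 : Dmulti 2 0 f = pd 0 (pd 0 f) := by
    simp [Dmulti]
  have hD11 : Dmulti 1 1 f = pd 0 (pd 1 f) := by
    simp [Dmulti]
  have hD02 : Dmulti 0 2 f = pd 1 (pd 1 f) := by
    simp [Dmulti]
  have hSbdd : BddAbove { v : ℝ | ∃ a1 a2 : ℕ, a1 + a2 = 2 ∧ ∃ x ∈ closure ΩH, v = |Dmulti a1 a2 f x| } := by
    refine ⟨max C1 (max C2 C3), ?_⟩
    rintro v ⟨a1, a2, hsum, x, hx, rfl⟩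
    have hcases : (a1 = 2 ∧ a2 = 0) ∨ (a1 = 1 ∧ a2 = 1) ∨ (a1 = 0 ∧ a2 = 2) := by omega
    rcases hcases with ⟨h1, h2⟩ | ⟨h1, h2⟩ | ⟨h1, h2⟩ <;> subst h1 <;> subst h2
    · rw [hD20]
      exact le_trans (hC1 x hx) (le_max_left _ _)
    · rw [hD11]
      exact le_trans (hC2 x hx) (le_trans (le_max_left _ _) (le_max_right _ _))
    · rw [hD02]
      exact le_trans (hC3 x hx) (le_trans (le_max_right _ _) (le_max_right _ _))
  have hCM_ge : ∀ a1 a2 : ℕ, a1 + a2 = 2 → ∀ x ∈ closure ΩH, |Dmulti a1 a2 f x| ≤ CM := by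
    intro a1 a2 hsum x hx
    exact le_csSup hSbdd ⟨a1, a2, hsum, x, hx, rfl⟩
  have hCM0 : 0 ≤ CM :=
    le_trans (abs_nonneg _) (hCM_ge 2 0 rfl (a k) (subset_closure (haΩH k)))
  -- second derivative operator norm bound
  have hsecond : ∀ x ∈ Metric.ball (a k) h, ‖fderiv ℝ (fderiv ℝ f) x‖ ≤ 2 * CM := by
    intro x hx
    have hxU : x ∈ U' := hballU hx
    have hxΩ : x ∈ closure ΩH := subset_closure (hballΩH hx)
    apply bilin_bound _ CM
    have hsym := snd_symm f U' hU'o hf x hxU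
    have hpd := pd_snd f U' hU'o hf x hxU
    have b20 : |fderiv ℝ (fderiv ℝ f) x (EuclideanSpace.single 0 1) (EuclideanSpace.single 0 1)| ≤ CM := by
      rw [← hpd 0 0]
      have := hCM_ge 2 0 rfl x hxΩ
      rwa [hD20] at this
    have b11 : |fderiv ℝ (fderiv ℝ f) x (EuclideanSpace.single 0 1) (EuclideanSpace.single 1 1)| ≤ CM := by
      rw [← hpd 0 1]
      have := hCM_ge 1 1 rfl x hxΩ
      rwa [hD11] at this
    have b02 : |fderiv ℝ (fderiv ℝ f) x (EuclideanSpace.single 1 1) (EuclideanSpace.single 1 1)| ≤ CM := by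
      rw [← hpd 1 1]
      have := hCM_ge 0 2 rfl x hxΩ
      rwa [hD02] at this
    have b10 : |fderiv ℝ (fderiv ℝ f) x (EuclideanSpace.single 1 1) (EuclideanSpace.single 0 1)| ≤ CM := by
      rw [hsym]
      exact b11
    intro i j
    fin_cases i <;> fin_cases j
    · exact b20
    · exact b11
    · exact b10
    · exact b02
  -- Taylor estimate
  have htay := taylor_est f U' hU'o hf (a k) h (2 * CM) (by positivity) hballU hsecond
    (Metric.mem_ball_self hh0)
  -- gradient and fderiv
  have hgrad : ∀ z : E2, (inner ℝ G z : ℝ) = fderiv ℝ f (a k) z := by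
    intro z
    rw [hG, gradient]
    exact InnerProductSpace.toDual_symm_apply
  -- remainder
  set ρ : E2 → ℝ := fun z => f (a k) - f (a k - z) - (inner ℝ G z : ℝ) with hρ
  have hmemball : ∀ z ∈ A, a k - z ∈ Metric.ball (a k) h := by
    intro z hz
    have hzh : ‖z‖ < h := ((mem_ann_zero h δ z).mp hz).2
    rw [Metric.mem_ball, dist_eq_norm, sub_sub_cancel_left, norm_neg]
    exact hzh
  have hρb : ∀ z ∈ A, |ρ z| ≤ 2 * CM * h * ‖z‖ := by
    intro z hz
    have hy := hmemball z hz
    have := htay (a k - z) hy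
    rw [sub_sub_cancel] at this
    have hρz : ρ z = f (a k) - f (a k - z) - fderiv ℝ f (a k) z := by
      rw [hρ]; simp only; rw [hgrad z]
    rw [hρz]
    exact this
  -- integrability of w
  have hwInt : Integrable w volume := w_integrable h δ w hwLinf hwSupp
  have hwIntA : IntegrableOn w A := hwInt.integrableOn
  set W : ℝ := ∫ z in A, w z with hW
  have hWeq : W = ∫ z, w z := w_total h δ hδ w hwSupp
  -- the translation map
  set T : E2 → E2 := fun y => a k - y with hT
  have hTmp : MeasurePreserving T volume volume := by
    have h1 : T = (fun y : E2 => a k + y) ∘ (fun y : E2 => -y) := by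
      funext y; simp [hT, sub_eq_add_neg]
    rw [h1]
    exact (measurePreserving_add_left volume (a k)).comp (Measure.measurePreserving_neg volume)
  have hTemb : MeasurableEmbedding T := by
    have h1 : T = ⇑((Homeomorph.neg E2).trans (Homeomorph.addLeft (a k))) := by
      funext y; simp [hT, sub_eq_add_neg]
    rw [h1]
    exact ((Homeomorph.neg E2).trans (Homeomorph.addLeft (a k))).measurableEmbedding
  -- positivity of W
  have hWpos : 0 < W := by
    have hLB := (hwLB (a k) (Metric.mem_ball_self hδ)).1
    set g : E2 → ℝ := fun y => w (a k - y) with hg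
    have hgInt : Integrable g volume := by
      have := (hTmp.integrable_comp_emb hTemb (g := w)).mpr hwInt
      exact this
    have hgnn : 0 ≤ᶠ[ae volume] g :=
      hTmp.quasiMeasurePreserving.ae hwNonneg
    have hσopen : ∀ i, IsOpen (σ i) := by
      intro i
      rw [hσ i]
      have heq : {x ∈ ΩH | ∀ j, j ≠ i → dist x (a i) < dist x (a j)}
          = ΩH ∩ ⋂ j : Fin N, {x : E2 | j ≠ i → dist x (a i) < dist x (a j)} := by
        ext x
        simp only [mem_inter_iff, mem_setOf_eq, mem_iInter] <;> tauto
      rw [heq]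
      apply hΩHopen.inter
      apply isOpen_iInter_of_finite
      intro j
      by_cases hji : j = i
      · have : {x : E2 | j ≠ i → dist x (a i) < dist x (a j)} = univ := by
          ext x; simp [hji]
        rw [this]; exact isOpen_univ
      · have : {x : E2 | j ≠ i → dist x (a i) < dist x (a j)}
            = {x : E2 | dist x (a i) < dist x (a j)} := by
          ext x; simp [hji]
        rw [this]
        exact isOpen_lt (continuous_id.dist continuous_const) (continuous_id.dist continuous_const)
    have hdisj : Set.Pairwise ↑(R (a k) h) (Function.onFun Disjoint σ) := by
      intro i _ j _ hij
      rw [Function.onFun, Set.disjoint_left]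
      intro x hxi hxj
      rw [hσ i] at hxi
      rw [hσ j] at hxj
      have h1 := hxi.2 j (Ne.symm hij)
      have h2 := hxj.2 i hij
      linarith
    have hsum : ∑ i ∈ R (a k) h, ∫ y in σ i, g y = ∫ y in ⋃ i ∈ R (a k) h, σ i, g y := by
      rw [integral_biUnion_finset (R (a k) h) (fun i _ => (hσopen i).measurableSet) hdisj
        (fun i _ => hgInt.integrableOn)]
    have hle : ∫ y in ⋃ i ∈ R (a k) h, σ i, g y ≤ ∫ y, g y :=
      setIntegral_le_integral hgInt hgnn
    have hgtot : ∫ y, g y = ∫ z, w z := hTmp.integral_comp hTemb w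
    have : C₀ ≤ W := by
      rw [hWeq, ← hgtot]
      calc C₀ ≤ ∑ i ∈ R (a k) h, ∫ y in σ i, w (a k - y) := hLB
        _ = ∑ i ∈ R (a k) h, ∫ y in σ i, g y := rfl
        _ = ∫ y in ⋃ i ∈ R (a k) h, σ i, g y := hsum
        _ ≤ ∫ y, g y := hle
    linarith
  -- transporting the annulus integral
  have hTim : T '' A = Ann h δ (a k) := by
    ext y
    constructor
    · rintro ⟨z, hz, rfl⟩
      rw [mem_ann]
      have hd : dist (T z) (a k) = ‖z‖ := by
        rw [hT]; simp only; rw [dist_eq_norm, sub_sub_cancel_left, norm_neg]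
      rw [hd]
      exact ⟨((mem_ann_zero h δ z).mp hz).1, ((mem_ann_zero h δ z).mp hz).2⟩
    · intro hy
      refine ⟨a k - y, ?_, by simp [hT]⟩
      rw [mem_ann_zero]
      have : ‖a k - y‖ = dist y (a k) := by rw [dist_eq_norm, norm_sub_rev]
      rw [this]
      exact ⟨((mem_ann h δ (a k) y).mp hy).1, ((mem_ann h δ (a k) y).mp hy).2⟩
  have htrans : (∫ y in Ann h δ (a k), (((f (a k) - f y) * w (a k - y)) / ‖a k - y‖ ^ 2) • (a k - y))
      = ∫ z in A, (((f (a k) - f (a k - z)) * w z) / ‖z‖ ^ 2) • z := by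
    rw [← hTim,
      hTmp.setIntegral_image_emb hTemb
        (fun y => (((f (a k) - f y) * w (a k - y)) / ‖a k - y‖ ^ 2) • (a k - y)) A]
    apply setIntegral_congr_fun hAmeas
    intro z _
    simp only [hT, sub_sub_cancel]
  -- split into main and remainder parts
  set Ψ₁ : E2 → E2 := fun z => ((inner ℝ G z : ℝ) * w z / ‖z‖ ^ 2) • z with hΨ₁
  set Ψ₂ : E2 → E2 := fun z => (ρ z * w z / ‖z‖ ^ 2) • z with hΨ₂
  have hsplit : ∀ z : E2, (((f (a k) - f (a k - z)) * w z) / ‖z‖ ^ 2) • z = Ψ₁ z + Ψ₂ z := by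
    intro z
    have hfz : f (a k) - f (a k - z) = (inner ℝ G z : ℝ) + ρ z := by rw [hρ]; ring
    rw [hΨ₁, hΨ₂]
    simp only
    rw [← add_smul]
    congr 1
    rw [hfz]
    ring
  have hΨ₁int : IntegrableOn Ψ₁ A := psi_int hδ w hwIntA G
  -- measurability/integrability of the remainder part
  have hρcont : ContinuousOn ρ A := by
    have hfc : ContinuousOn (fun z : E2 => f (a k - z)) A := by
      apply ContinuousOn.comp (hf.continuousOn) ((continuous_const.sub continuous_id).continuousOn)
      intro z hz
      exact hballU (hmemball z hz)
    have hic : Continuous (fun z : E2 => (inner ℝ G z : ℝ)) :=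
      Continuous.inner continuous_const continuous_id
    exact (continuousOn_const.sub hfc).sub hic.continuousOn
  have hΨ₂int : IntegrableOn Ψ₂ A :=
    psi2_int hδ w ρ hwIntA hρcont (2 * CM * h) (by positivity) hρb
  -- the radial identity
  have hJ1 : ∫ z in A, Ψ₁ z = (W / 2) • G := radial_identity hδ w wrad hwIntA hwRad G
  -- assembling
  have hJsum : (∫ z in A, (((f (a k) - f (a k - z)) * w z) / ‖z‖ ^ 2) • z)
      = (∫ z in A, Ψ₁ z) + ∫ z in A, Ψ₂ z := by
    rw [setIntegral_congr_fun hAmeas (fun z _ => hsplit z)]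
    exact integral_add hΨ₁int hΨ₂int
  rw [htrans, hJsum, hJ1]
  have hcancel : G - (2 / W) • ((W / 2) • G + ∫ z in A, Ψ₂ z)
      = - ((2 / W) • ∫ z in A, Ψ₂ z) := by
    rw [smul_add, smul_smul]
    have : 2 / W * (W / 2) = 1 := by field_simp
    rw [this, one_smul]
    abel
  rw [hcancel, norm_neg, norm_smul, Real.norm_eq_abs, abs_of_pos (div_pos two_pos hWpos)]
  -- bounding the remainder integral
  have hb2 : ‖∫ z in A, Ψ₂ z‖ ≤ 2 * CM * h * W := by
    have hmono : ∫ z in A, ‖Ψ₂ z‖ ≤ ∫ z in A, 2 * CM * h * w z := by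
      apply integral_mono_ae hΨ₂int.norm (Integrable.const_mul hwIntA (2 * CM * h))
      filter_upwards [ae_restrict_mem hAmeas, ae_restrict_of_ae hwNonneg] with z hz hw0
      have hz0 : 0 < ‖z‖ := lt_of_le_of_lt hδ.le ((mem_ann_zero h δ z).mp hz).1
      have hb := hρb z hz
      calc ‖Ψ₂ z‖ = |ρ z * w z / ‖z‖ ^ 2| * ‖z‖ := by
            rw [hΨ₂]; simp only; rw [norm_smul, Real.norm_eq_abs]
        _ = |ρ z| * w z / ‖z‖ ^ 2 * ‖z‖ := by
            rw [abs_div, abs_mul, abs_pow, abs_norm, abs_of_nonneg hw0]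
        _ ≤ (2 * CM * h * ‖z‖) * w z / ‖z‖ ^ 2 * ‖z‖ := by gcongr
        _ = 2 * CM * h * w z := by field_simp
    calc ‖∫ z in A, Ψ₂ z‖ ≤ ∫ z in A, ‖Ψ₂ z‖ := norm_integral_le_integral_norm _
      _ ≤ ∫ z in A, 2 * CM * h * w z := hmono
      _ = 2 * CM * h * W := by rw [integral_const_mul]
  calc 2 / W * ‖∫ z in A, Ψ₂ z‖ ≤ 2 / W * (2 * CM * h * W) := by
        exact mul_le_mul_of_nonneg_left hb2 (by positivity)
    _ = 4 * h * CM := by field_simp; ring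
end
end
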